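/- arXiv:1507.02859 — 9 statements merged into one kernel-verified Lean document; each statement's English description precedes it below -/
import Mathlib

section
/- Let f : ℝᴺ × ℝ → ℝ be continuous, F(x,t) = ∫₀ᵗ f(x,s) ds, and assume: f(x,t) = o(|t|) as t → 0 uniformly in x, F(x,t) ≥ 0 for all (x,t), and for each x the map t ↦ f(x,t)/|t| is non-decreasing on (−∞,0) and on (0,∞). Then for all x ∈ ℝᴺ, all t ≥ 0 and all τ, σ ∈ ℝ: F(x, tτ + σ) ≥ F(x, τ) + f(x, τ)·[((t² − 1)/2)·τ + t·σ]. -/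
/-!
Fix `x`, write `g = f(x, ·)` and `c = g(τ)/τ`, which is `≥ 0` by (WN) since `g(s)/|s| → 0`
at `0`. By (WN), `g(s) - c s` changes sign at `s = τ` on the closed half-line containing `τ`,
so integrating from `τ` gives `F(b) ≥ F(τ) + c (b² - τ²)/2` for every `b` on that half-line.
With `b = tτ + σ` the claimed lower bound equals `F(τ) + c ((b² - τ²)/2 - (tτ - b)²/2)`.
If `b` is on the other side, take `b = 0` instead and use `F(b) ≥ 0` and `(tτ - b)² ≥ b²`.
-/

open Filter Topology Set Asymptotics

theorem intervalIntegral.integral_nonneg_of_sub_mul_nonneg {φ : ℝ → ℝ} {a b : ℝ}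
    (h : ∀ s ∈ uIcc a b, 0 ≤ (s - a) * φ s) : 0 ≤ ∫ s in a..b, φ s := by
  rcases le_total a b with hab | hba
  · rw [intervalIntegral.integral_of_le hab, MeasureTheory.integral_Ioc_eq_integral_Ioo]
    refine MeasureTheory.setIntegral_nonneg measurableSet_Ioo fun s hs => ?_
    exact nonneg_of_mul_nonneg_right (h s (Ioo_subset_Icc_self.trans Icc_subset_uIcc hs))
      (sub_pos.2 hs.1)
  · rw [intervalIntegral.integral_symm, neg_nonneg, intervalIntegral.integral_of_le hba,
      MeasureTheory.integral_Ioc_eq_integral_Ioo]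
    refine MeasureTheory.setIntegral_nonpos measurableSet_Ioo fun s hs => ?_
    exact nonpos_of_mul_nonneg_right (h s (Ioo_subset_Icc_self.trans Icc_subset_uIcc' hs))
      (sub_neg.2 hs.2)

theorem div_nonneg_of_monotoneOn_div_abs {g : ℝ → ℝ}
    (hpos : MonotoneOn (fun s => g s / |s|) (Ioi 0))
    (hneg : MonotoneOn (fun s => g s / |s|) (Iio 0))
    (hlim : Tendsto (fun s => g s / |s|) (𝓝 0) (𝓝 0)) {a : ℝ} (ha : a ≠ 0) :
    0 ≤ g a / a := by
  rcases ha.lt_or_gt with ha | ha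
  · have : g a / |a| ≤ 0 := ge_of_tendsto (hlim.mono_left nhdsWithin_le_nhds) <|
      mem_of_superset (Ioo_mem_nhdsLT ha) fun s hs => hneg ha hs.2 hs.1.le
    rw [abs_of_neg ha, div_neg] at this
    linarith
  · have : 0 ≤ g a / |a| := le_of_tendsto (hlim.mono_left nhdsWithin_le_nhds) <|
      mem_of_superset (Ioo_mem_nhdsGT ha) fun s hs => hpos hs.1 ha hs.2.le
    rwa [abs_of_pos ha] at this

theorem sub_mul_sub_div_mul_nonneg {g : ℝ → ℝ}
    (hpos : MonotoneOn (fun s => g s / |s|) (Ioi 0))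
    (hneg : MonotoneOn (fun s => g s / |s|) (Iio 0))
    (hg0 : g 0 = 0) {a s : ℝ} (ha : a ≠ 0) (has : 0 ≤ a * s) :
    0 ≤ (s - a) * (g s - g a / a * s) := by
  rcases eq_or_ne s 0 with rfl | hs
  · simp [hg0]
  have of_monotoneOn : ∀ S : Set ℝ, MonotoneOn (fun s => g s / |s|) S → a ∈ S → s ∈ S →
      0 < s / a → 0 ≤ (s - a) * (g s - g a / a * s) := fun S hS haS hsS hsa => by
    have hsplit : g s - g a / a * s = |s| * (g s / |s| - g a / |a|) := by
      rw [mul_sub, mul_div_cancel₀ _ (abs_ne_zero.2 hs), mul_div_left_comm, ← abs_div,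
        abs_of_pos hsa, mul_div_left_comm, mul_comm s]
    have := (hS.monovaryOn monotoneOn_id).sub_mul_sub_nonneg haS hsS
    rw [hsplit, mul_left_comm]
    exact mul_nonneg (abs_nonneg s) (by simpa only [id, mul_comm] using this)
  rcases pos_and_pos_or_neg_and_neg_of_mul_pos (has.lt_of_ne' (mul_ne_zero ha hs)) with
    ⟨ha, hs⟩ | ⟨ha, hs⟩
  · exact of_monotoneOn _ hpos ha hs (div_pos hs ha)
  · exact of_monotoneOn _ hneg ha hs (div_pos_of_neg_of_neg hs ha)

theorem div_mul_sq_sub_sq_le_integral {g : ℝ → ℝ} (hg : Continuous g)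
    (hpos : MonotoneOn (fun s => g s / |s|) (Ioi 0))
    (hneg : MonotoneOn (fun s => g s / |s|) (Iio 0))
    (hg0 : g 0 = 0) {a b : ℝ} (ha : a ≠ 0) (hab : 0 ≤ a * b) :
    g a / a * ((b ^ 2 - a ^ 2) / 2) ≤ ∫ s in a..b, g s := by
  have h := intervalIntegral.integral_nonneg_of_sub_mul_nonneg (φ := fun s => g s - g a / a * s)
    fun s hs => sub_mul_sub_div_mul_nonneg hpos hneg hg0 ha <| by
      rcases mem_uIcc.1 hs with hs | hs <;> rcases le_total 0 a with ha' | ha' <;> nlinarith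
  rw [intervalIntegral.integral_sub (hg.intervalIntegrable _ _)
    ((continuous_const_mul (g a / a)).intervalIntegrable _ _), intervalIntegral.integral_const_mul,
    integral_id] at h
  linarith

theorem integral_add_mul_le_integral_mul_add {g : ℝ → ℝ} (hg : Continuous g)
    (hsmall : g =o[𝓝 0] id)
    (hpos : MonotoneOn (fun s => g s / |s|) (Ioi 0))
    (hneg : MonotoneOn (fun s => g s / |s|) (Iio 0))
    (hG : ∀ u, 0 ≤ ∫ s in (0:ℝ)..u, g s) {t : ℝ} (ht : 0 ≤ t) (τ σ : ℝ) :
    (∫ s in (0:ℝ)..τ, g s) + g τ * (((t ^ 2 - 1) / 2) * τ + t * σ) ≤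
      ∫ s in (0:ℝ)..(t * τ + σ), g s := by
  have hg0 : g 0 = 0 := (hsmall.isBigO.eq_zero_imp.self_of_nhds) rfl
  rcases eq_or_ne τ 0 with rfl | hτ
  · simpa [hg0] using hG _
  have hc : 0 ≤ g τ / τ := div_nonneg_of_monotoneOn_div_abs hpos hneg
    (isLittleO_abs_right.2 hsmall).tendsto_div_nhds_zero hτ
  set b := t * τ + σ
  have hincr : ∀ u, (∫ s in (0:ℝ)..u, g s) - ∫ s in (0:ℝ)..τ, g s = ∫ s in τ..u, g s :=
    fun u => intervalIntegral.integral_interval_sub_left (hg.intervalIntegrable _ _)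
      (hg.intervalIntegrable _ _)
  have hbound : g τ * (((t ^ 2 - 1) / 2) * τ + t * σ) =
      g τ / τ * ((b ^ 2 - τ ^ 2) / 2) - g τ / τ * ((t * τ - b) ^ 2 / 2) := by
    field_simp
    ring
  have hdefect : 0 ≤ g τ / τ * ((t * τ - b) ^ 2 / 2) := by positivity
  rcases le_or_gt 0 (τ * b) with hτb | hτb
  · linarith [div_mul_sq_sub_sq_le_integral hg hpos hneg hg0 hτ hτb, hincr b]
  · have hτ0 := div_mul_sq_sub_sq_le_integral hg hpos hneg hg0 hτ (mul_zero τ).ge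
    have hb : b ^ 2 ≤ (t * τ - b) ^ 2 := by nlinarith [mul_nonneg ht (neg_nonneg.2 hτb.le)]
    have := mul_le_mul_of_nonneg_left hb hc
    have h0 := hincr 0
    rw [intervalIntegral.integral_same] at h0
    linarith [hincr b, hG b]

/-- **Scalar core of Lemma 3.1.** Let `f : ℝᴺ × ℝ → ℝ` be continuous with
primitive `F(x,t) = ∫₀ᵗ f(x,s) ds`; assume `f(x,t) = o(|t|)` as `t → 0`
uniformly in `x`, `F ≥ 0`, and (WN): `t ↦ f(x,t)/|t|` is non-decreasing on
`(−∞,0)` and on `(0,∞)`. Then for all `x`, `t ≥ 0` and `τ, σ ∈ ℝ`: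
`F(x, tτ + σ) ≥ F(x, τ) + f(x, τ)·[((t² − 1)/2)·τ + t·σ]`. -/
theorem scalar_core_lemma_3_1 (N : ℕ)
    (f F : (Fin N → ℝ) → ℝ → ℝ)
    (hf : Continuous fun p : (Fin N → ℝ) × ℝ => f p.1 p.2)
    (hF : ∀ x t, F x t = ∫ s in (0:ℝ)..t, f x s)
    -- (F2): f(x,t) = o(|t|) as t → 0 uniformly in x, and F ≥ 0
    (hsmall : ∀ ε > 0, ∃ δ > 0, ∀ x t, |t| < δ → |f x t| ≤ ε * |t|)
    (hFnonneg : ∀ x t, 0 ≤ F x t)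
    -- (WN): t ↦ f(x,t)/|t| non-decreasing on (0,∞) and on (−∞,0)
    (hWNpos : ∀ x, ∀ s t : ℝ, 0 < s → s ≤ t → f x s / |s| ≤ f x t / |t|)
    (hWNneg : ∀ x, ∀ s t : ℝ, s ≤ t → t < 0 → f x s / |s| ≤ f x t / |t|) :
    ∀ x, ∀ t : ℝ, 0 ≤ t → ∀ τ σ : ℝ,
      F x (t * τ + σ) ≥ F x τ + f x τ * (((t ^ 2 - 1) / 2) * τ + t * σ) := by
  intro x t ht τ σ
  have hlittleO : f x =o[𝓝 0] id := isLittleO_iff.2 fun ε hε => by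
    obtain ⟨δ, hδ, h⟩ := hsmall ε hε
    filter_upwards [Metric.ball_mem_nhds 0 hδ] with u hu
    simpa using h x u (by simpa using hu)
  simp only [hF] at hFnonneg ⊢
  exact integral_add_mul_le_integral_mul_add (hf.comp (Continuous.prodMk_right x)) hlittleO
    (fun s hs u _ hsu => hWNpos x s u hs hsu) (fun s _ u hu hsu => hWNneg x s u hsu hu)
    (hFnonneg x) ht τ σ
end

section
/- Let f : ℝᴺ × ℝ → ℝ be continuous with F(x,t) = ∫₀ᵗ f(x,s) ds, and assume that for each x the map t ↦ f(x,t)/|t| is non-decreasing on (−∞,0) and on (0,∞). Then for every θ ∈ [0,1] and all (x,t) ∈ ℝᴺ × ℝ: ((1 − θ²)/2)·t·f(x,t) ≥ F(x,t) − F(x,θt). In particular f satisfies condition (Ta). -/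
/-! For `0 < s ≤ t`, (WN) gives `f s ≤ s · f t / t`; integrating this over `[θt, t]` yields
`∫_{θt}^t f ≤ (t² − θ²t²)/2 · f t / t`, which is the claim. Negative `t` reduce to positive ones
through the reflection `s ↦ −f(−s)`, which carries (WN) on `(−∞, 0)` to (WN) on `(0, ∞)`. -/

open Set intervalIntegral

section

variable {g : ℝ → ℝ}

lemma le_mul_div_of_monotoneOn_div_abs (hg : MonotoneOn (fun s => g s / |s|) (Ioi 0))
    {s t : ℝ} (hs : 0 < s) (hst : s ≤ t) : g s ≤ s * (g t / t) := by
  have h := hg hs (hs.trans_le hst) hst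
  simp only [abs_of_pos hs, abs_of_pos (hs.trans_le hst)] at h
  rwa [div_le_iff₀' hs] at h

lemma monotoneOn_neg_comp_neg_div_abs (hg : MonotoneOn (fun s => g s / |s|) (Iio 0)) :
    MonotoneOn (fun s => -g (-s) / |s|) (Ioi 0) := by
  intro s hs t ht hst
  have h := hg (mem_Iio.mpr (neg_lt_zero.mpr ht)) (mem_Iio.mpr (neg_lt_zero.mpr hs))
    (neg_le_neg hst)
  simp only [abs_neg] at h
  simp only [neg_div]
  exact neg_le_neg h

lemma integral_le_of_monotoneOn_div_abs_of_pos (hg : Continuous g)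
    (hmono : MonotoneOn (fun s => g s / |s|) (Ioi 0)) {θ t : ℝ} (hθ : θ ∈ Icc (0 : ℝ) 1)
    (ht : 0 < t) : ∫ s in θ * t..t, g s ≤ (1 - θ ^ 2) / 2 * (t * g t) := by
  have hθt : θ * t ≤ t := mul_le_of_le_one_left ht.le hθ.2
  calc ∫ s in θ * t..t, g s ≤ ∫ s in θ * t..t, s * (g t / t) :=
        integral_mono_on_of_le_Ioo hθt (hg.intervalIntegrable _ _)
          ((by fun_prop : Continuous fun s : ℝ => s * (g t / t)).intervalIntegrable _ _)
          fun s hs => le_mul_div_of_monotoneOn_div_abs hmono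
            ((mul_nonneg hθ.1 ht.le).trans_lt hs.1) hs.2.le
    _ = (1 - θ ^ 2) / 2 * (t * g t) := by
        rw [integral_mul_const, integral_id]
        field_simp

lemma integral_le_of_monotoneOn_div_abs (hg : Continuous g)
    (hpos : MonotoneOn (fun s => g s / |s|) (Ioi 0))
    (hneg : MonotoneOn (fun s => g s / |s|) (Iio 0)) {θ : ℝ} (hθ : θ ∈ Icc (0 : ℝ) 1)
    (t : ℝ) : ∫ s in θ * t..t, g s ≤ (1 - θ ^ 2) / 2 * (t * g t) := by
  rcases lt_trichotomy t 0 with ht | rfl | ht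
  · have := integral_le_of_monotoneOn_div_abs_of_pos (g := fun s => -g (-s)) (by fun_prop)
      (monotoneOn_neg_comp_neg_div_abs hneg) hθ (neg_pos.mpr ht)
    rw [integral_comp_neg (fun s => -g s), integral_neg] at this
    simp only [neg_neg, mul_neg, integral_symm (θ * t)] at this
    linarith
  · simp
  · exact integral_le_of_monotoneOn_div_abs_of_pos hg hpos hθ ht

end

/-- **(WN) implies (Ta)** (with any `θ₀ ∈ (0,1)`, indeed for all `θ ∈ [0,1]`).
Let `f : ℝᴺ × ℝ → ℝ` be continuous with primitive `F(x,t) = ∫₀ᵗ f(x,s) ds` and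
suppose `t ↦ f(x,t)/|t|` is non-decreasing on `(−∞,0)` and on `(0,∞)`. Then
for every `θ ∈ [0,1]` and all `(x,t)`:
`((1 − θ²)/2)·t·f(x,t) ≥ F(x,t) − F(x,θt)`. -/
theorem WN_implies_Ta (N : ℕ)
    (f F : (Fin N → ℝ) → ℝ → ℝ)
    (hf : Continuous fun p : (Fin N → ℝ) × ℝ => f p.1 p.2)
    (hF : ∀ x t, F x t = ∫ s in (0:ℝ)..t, f x s)
    -- (WN)
    (hWNpos : ∀ x, ∀ s t : ℝ, 0 < s → s ≤ t → f x s / |s| ≤ f x t / |t|)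
    (hWNneg : ∀ x, ∀ s t : ℝ, s ≤ t → t < 0 → f x s / |s| ≤ f x t / |t|) :
    ∀ θ : ℝ, θ ∈ Set.Icc (0:ℝ) 1 → ∀ x t,
      ((1 - θ ^ 2) / 2) * (t * f x t) ≥ F x t - F x (θ * t) := by
  intro θ hθ x t
  have hfx : Continuous (f x) := hf.comp (Continuous.prodMk_right x)
  rw [hF, hF, integral_interval_sub_left (hfx.intervalIntegrable _ _)
    (hfx.intervalIntegrable _ _)]
  exact integral_le_of_monotoneOn_div_abs hfx (fun s hs t _ hst => hWNpos x s t hs hst)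
    (fun s _ t ht hst => hWNneg x s t hst ht) hθ t
end

section
/- Let f : ℝᴺ × ℝ → ℝ be continuous with F(x,t) = ∫₀ᵗ f(x,s) ds, and assume there exists μ > 2 such that 0 ≤ μ F(x,t) ≤ t f(x,t) for all (x,t) ∈ ℝᴺ × ℝ (condition (WAR)). Then f satisfies condition (Ta): with θ₀ = √(1 − 2/μ) ∈ (0,1), for every θ ∈ [0,θ₀] and all (x,t), ((1 − θ²)/2)·t·f(x,t) ≥ F(x,t) − F(x,θt). -/
/-! The estimate is pointwise in `(x, t)`: (WAR) gives `F(x,θt) ≥ 0` and `F(x,t) ≤ t f(x,t)/μ`,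
and `θ ≤ √(1 - 2/μ)` is exactly the condition `1/μ ≤ (1 - θ²)/2`. -/

lemma sqrt_one_sub_two_div_mem_Ioo {μ : ℝ} (hμ : 2 < μ) :
    Real.sqrt (1 - 2 / μ) ∈ Set.Ioo (0 : ℝ) 1 := by
  have h2μ : 2 / μ ∈ Set.Ioo (0 : ℝ) 1 :=
    ⟨by positivity, (div_lt_one (by linarith)).2 hμ⟩
  refine ⟨Real.sqrt_pos.2 (by linarith [h2μ.2]), ?_⟩
  rw [Real.sqrt_lt' one_pos]
  linarith [h2μ.1]

lemma inv_le_half_one_sub_sq {μ θ : ℝ} (hμ : 2 ≤ μ)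
    (hθ : θ ∈ Set.Icc (0 : ℝ) (Real.sqrt (1 - 2 / μ))) :
    μ⁻¹ ≤ (1 - θ ^ 2) / 2 := by
  have h2μ : 2 / μ ≤ 1 := (div_le_one (by linarith)).2 hμ
  have hθsq : θ ^ 2 ≤ 1 - 2 / μ := (Real.le_sqrt hθ.1 (by linarith)).1 hθ.2
  have : 2 / μ = 2 * μ⁻¹ := div_eq_mul_inv 2 μ
  linarith

lemma sub_le_mul_of_ambrosetti_rabinowitz {μ c a b p : ℝ} (hμ : 0 < μ) (hc : μ⁻¹ ≤ c)
    (hb : 0 ≤ μ * b) (ha : 0 ≤ μ * a) (hap : μ * a ≤ p) :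
    a - b ≤ c * p := by
  have hb' : 0 ≤ b := nonneg_of_mul_nonneg_right hb hμ
  have hp : 0 ≤ p := ha.trans hap
  calc a - b ≤ a := by linarith
    _ ≤ μ⁻¹ * p := by rw [inv_mul_eq_div, le_div_iff₀' hμ]; exact hap
    _ ≤ c * p := mul_le_mul_of_nonneg_right hc hp

theorem WAR_implies_Ta_general (N : ℕ)
    (f F : (Fin N → ℝ) → ℝ → ℝ)
    (μ : ℝ) (hμ : 2 < μ)
    -- (WAR)
    (hWAR : ∀ x t, 0 ≤ μ * F x t ∧ μ * F x t ≤ t * f x t) :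
    Real.sqrt (1 - 2 / μ) ∈ Set.Ioo (0:ℝ) 1 ∧
    ∀ θ : ℝ, θ ∈ Set.Icc (0:ℝ) (Real.sqrt (1 - 2 / μ)) → ∀ x t,
      ((1 - θ ^ 2) / 2) * (t * f x t) ≥ F x t - F x (θ * t) := by
  have hμ0 : 0 < μ := by linarith
  refine ⟨sqrt_one_sub_two_div_mem_Ioo hμ, fun θ hθ x t => ?_⟩
  exact sub_le_mul_of_ambrosetti_rabinowitz hμ0 (inv_le_half_one_sub_sq hμ.le hθ)
    (hWAR x (θ * t)).1 (hWAR x t).1 (hWAR x t).2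

/-- **(WAR) implies (Ta).** Let `f : ℝᴺ × ℝ → ℝ` be continuous with primitive
`F(x,t) = ∫₀ᵗ f(x,s) ds`, and suppose there is `μ > 2` with
`0 ≤ μ F(x,t) ≤ t f(x,t)` for all `(x,t)`. Then with `θ₀ = √(1 − 2/μ) ∈ (0,1)`,
for every `θ ∈ [0,θ₀]` and all `(x,t)`:
`((1 − θ²)/2)·t·f(x,t) ≥ F(x,t) − F(x,θt)`. -/
theorem WAR_implies_Ta (N : ℕ)
    (f F : (Fin N → ℝ) → ℝ → ℝ)
    (hf : Continuous fun p : (Fin N → ℝ) × ℝ => f p.1 p.2)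
    (hF : ∀ x t, F x t = ∫ s in (0:ℝ)..t, f x s)
    (μ : ℝ) (hμ : 2 < μ)
    -- (WAR)
    (hWAR : ∀ x t, 0 ≤ μ * F x t ∧ μ * F x t ≤ t * f x t) :
    Real.sqrt (1 - 2 / μ) ∈ Set.Ioo (0:ℝ) 1 ∧
    ∀ θ : ℝ, θ ∈ Set.Icc (0:ℝ) (Real.sqrt (1 - 2 / μ)) → ∀ x t,
      ((1 - θ ^ 2) / 2) * (t * f x t) ≥ F x t - F x (θ * t) :=
  WAR_implies_Ta_general N f F μ hμ hWAR
end

section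
/- Let N ≥ 1, let 2* = 2N/(N−2) for N ≥ 3 and 2* = +∞ for N ∈ {1,2}, and let f : ℝᴺ × ℝ → ℝ be continuous satisfying: (F1) there exist p ∈ (2, 2*) and C₀ > 0 with |f(x,t)| ≤ C₀(1 + |t|^{p−1}) for all (x,t); (F2) f(x,t) = o(|t|) as t → 0 uniformly in x, and F(x,t) := ∫₀ᵗ f(x,s) ds ≥ 0; (WAR) there exists μ > 2 with 0 ≤ μ F(x,t) ≤ t f(x,t) for all (x,t). Then f satisfies (F4): 𝓕(x,t) := (1/2) t f(x,t) − F(x,t) ≥ 0 for all (x,t), and for every Λ > 0 and every δ₀ ∈ (0, Λ) there exist c₀ > 0 and κ > max{1, N/2} such that for all (x,t) with t ≠ 0, if f(x,t)/t ≥ Λ − δ₀ then (f(x,t)/t)^κ ≤ c₀ 𝓕(x,t). -/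
open Filter Topology

set_option maxHeartbeats 1600000 in
/-- **(F1), (F2), (WAR) imply (F4).** Let `N ≥ 1`, `2* = 2N/(N−2)` for `N ≥ 3`
(`= ∞` for `N ≤ 2`), and `f : ℝᴺ × ℝ → ℝ` continuous with subcritical growth
(F1), with `f(x,t) = o(|t|)` as `t → 0` uniformly in `x` and `F ≥ 0` (F2), and
satisfying (WAR): `0 ≤ μ F(x,t) ≤ t f(x,t)` for some `μ > 2`. Then
`𝓕(x,t) = (1/2) t f(x,t) − F(x,t) ≥ 0`, and for every `Λ > 0`, `δ₀ ∈ (0,Λ)`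
there exist `c₀ > 0` and `κ > max{1, N/2}` such that whenever `t ≠ 0` and
`f(x,t)/t ≥ Λ − δ₀` one has `(f(x,t)/t)^κ ≤ c₀ 𝓕(x,t)`. -/
theorem WAR_implies_F4 (N : ℕ) (hN : 1 ≤ N)
    (f F : (Fin N → ℝ) → ℝ → ℝ)
    (hf : Continuous fun p : (Fin N → ℝ) × ℝ => f p.1 p.2)
    (hF : ∀ x t, F x t = ∫ s in (0:ℝ)..t, f x s)
    -- (F1): 2 < p < 2* and |f(x,t)| ≤ C₀(1 + |t|^(p−1))
    (p C₀ : ℝ) (hp : 2 < p) (hpsub : 3 ≤ N → p < 2 * N / (N - 2)) (hC₀ : 0 < C₀)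
    (hgrowth : ∀ x t, |f x t| ≤ C₀ * (1 + |t| ^ (p - 1)))
    -- (F2)
    (hsmall : ∀ ε > 0, ∃ δ > 0, ∀ x t, |t| < δ → |f x t| ≤ ε * |t|)
    (hFnonneg : ∀ x t, 0 ≤ F x t)
    -- (WAR)
    (μ : ℝ) (hμ : 2 < μ)
    (hWAR : ∀ x t, 0 ≤ μ * F x t ∧ μ * F x t ≤ t * f x t) :
    (∀ x t, 0 ≤ (1 / 2) * t * f x t - F x t) ∧
    ∀ Λ : ℝ, 0 < Λ → ∀ δ₀ ∈ Set.Ioo 0 Λ,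
      ∃ c₀ > (0:ℝ), ∃ κ : ℝ, max 1 ((N : ℝ) / 2) < κ ∧
        ∀ x t, t ≠ 0 → Λ - δ₀ ≤ f x t / t →
          (f x t / t) ^ κ ≤ c₀ * ((1 / 2) * t * f x t - F x t) := by
  have key : ∀ x t, (μ - 2) / (2 * μ) * (t * f x t) ≤ (1 / 2) * t * f x t - F x t := by
    intro x t
    obtain ⟨h1, h2⟩ := hWAR x t
    have hF0 := hFnonneg x t
    rw [div_mul_eq_mul_div, div_le_iff₀ (by linarith : (0:ℝ) < 2 * μ)]
    nlinarith
  constructor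
  · intro x t
    obtain ⟨h1, h2⟩ := hWAR x t
    have hF0 := hFnonneg x t
    nlinarith
  intro Λ hΛ δ₀ hδ₀
  obtain ⟨hδ₀0, hδ₀Λ⟩ := hδ₀
  have hL0 : 0 < Λ - δ₀ := by linarith
  set L := Λ - δ₀ with hLdef
  obtain ⟨δ, hδ0, hδ⟩ := hsmall (L / 2) (by positivity)
  have hp2 : (0:ℝ) < p - 2 := by linarith
  set K : ℝ := 1 + 2 / (p - 2) with hKdef
  have hK0 : 0 < 2 / (p - 2) := by positivity
  have hK1 : 1 < K := by rw [hKdef]; linarith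
  have hNK : (N:ℝ) / 2 < K := by
    rcases le_or_gt 3 N with h3 | h3
    · have hps := hpsub h3
      have hN2 : (0:ℝ) < (N:ℝ) - 2 := by
        have : (3:ℝ) ≤ (N:ℝ) := by exact_mod_cast h3
        linarith
      rw [lt_div_iff₀ hN2] at hps
      have h4 : ((N:ℝ) - 2) / 2 < 2 / (p - 2) := by
        rw [div_lt_div_iff₀ (by norm_num) hp2]
        nlinarith
      rw [hKdef]; linarith
    · have hN2 : (N:ℝ) ≤ 2 := by
        have : N ≤ 2 := by omega
        exact_mod_cast this
      linarith
  have hMK : max 1 ((N:ℝ) / 2) < K := max_lt hK1 hNK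
  set κ : ℝ := (max 1 ((N:ℝ) / 2) + K) / 2 with hκdef
  have hκM : max 1 ((N:ℝ) / 2) < κ := by rw [hκdef]; linarith
  have hκK : κ < K := by rw [hκdef]; linarith
  have hκ1 : 1 < κ := lt_of_le_of_lt (le_max_left _ _) hκM
  have ha0 : 0 < (p - 2) * (κ - 1) := by nlinarith
  have ha2 : (p - 2) * (κ - 1) ≤ 2 := by
    have h1 : κ - 1 ≤ 2 / (p - 2) := by rw [hKdef] at hκK; linarith
    calc (p - 2) * (κ - 1) ≤ (p - 2) * (2 / (p - 2)) := by nlinarith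
      _ = 2 := by field_simp
  have hδp : (0:ℝ) < δ ^ (p - 2) := Real.rpow_pos_of_pos hδ0 _
  set C₂ : ℝ := C₀ / (δ * δ ^ (p - 2)) + C₀ with hC₂
  have hC₂0 : 0 < C₂ := add_pos (div_pos hC₀ (mul_pos hδ0 hδp)) hC₀
  set D : ℝ := C₂ ^ (κ - 1) * max 1 (1 / δ ^ 2) with hDdef
  have hD0 : 0 < D :=
    mul_pos (Real.rpow_pos_of_pos hC₂0 _) (lt_max_iff.mpr (Or.inl one_pos))
  have hc₁ : 0 < (μ - 2) / (2 * μ) := div_pos (by linarith) (by linarith)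
  refine ⟨D / ((μ - 2) / (2 * μ)), div_pos hD0 hc₁, κ, hκM, ?_⟩
  intro x t ht hg
  set g := f x t / t with hgdef
  have hg0 : 0 < g := lt_of_lt_of_le hL0 hg
  have ht0 : 0 < |t| := abs_pos.mpr ht
  have habs : g ≤ |f x t| / |t| := by
    rw [hgdef]
    calc f x t / t ≤ |f x t / t| := le_abs_self _
      _ = |f x t| / |t| := abs_div _ _
  -- Step A : δ ≤ |t|
  have htδ : δ ≤ |t| := by
    by_contra hcon
    push_neg at hcon
    have h1 := hδ x t hcon
    have h2 : g ≤ L / 2 := le_trans habs ((div_le_iff₀ ht0).mpr h1)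
    linarith
  -- Step B : g ≤ C₂ * |t| ^ (p-2)
  have hu0 : 0 < |t| ^ (p - 2) := Real.rpow_pos_of_pos ht0 _
  have huδ : δ ^ (p - 2) ≤ |t| ^ (p - 2) := Real.rpow_le_rpow hδ0.le htδ (by linarith)
  have hw : |t| ^ (p - 1) = |t| * |t| ^ (p - 2) := by
    rw [show p - 1 = 1 + (p - 2) by ring, Real.rpow_add ht0, Real.rpow_one]
  have hB : g ≤ C₂ * |t| ^ (p - 2) := by
    have h4 : |f x t| / |t| ≤ C₀ / |t| + C₀ * |t| ^ (p - 2) := by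
      rw [div_le_iff₀ ht0]
      calc |f x t| ≤ C₀ * (1 + |t| ^ (p - 1)) := hgrowth x t
        _ = (C₀ / |t| + C₀ * |t| ^ (p - 2)) * |t| := by rw [hw]; field_simp
    have h5 : C₀ / |t| ≤ C₀ / (δ * δ ^ (p - 2)) * |t| ^ (p - 2) := by
      rw [div_le_iff₀ ht0, div_mul_eq_mul_div, div_mul_eq_mul_div,
        le_div_iff₀ (mul_pos hδ0 hδp)]
      have hmm : δ * δ ^ (p - 2) ≤ |t| * |t| ^ (p - 2) :=
        mul_le_mul htδ huδ hδp.le ht0.le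
      nlinarith
    calc g ≤ |f x t| / |t| := habs
      _ ≤ C₀ / |t| + C₀ * |t| ^ (p - 2) := h4
      _ ≤ C₂ * |t| ^ (p - 2) := by rw [hC₂, add_mul]; exact add_le_add h5 le_rfl
  -- Step C : g^(κ-1) ≤ D * t^2
  have hC : g ^ (κ - 1) ≤ C₂ ^ (κ - 1) * (|t| ^ (p - 2)) ^ (κ - 1) := by
    rw [← Real.mul_rpow hC₂0.le hu0.le]
    exact Real.rpow_le_rpow hg0.le hB (by linarith)
  have hpow : (|t| ^ (p - 2)) ^ (κ - 1) = |t| ^ ((p - 2) * (κ - 1)) :=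
    (Real.rpow_mul (abs_nonneg t) _ _).symm
  have hD1 : |t| ^ ((p - 2) * (κ - 1)) ≤ max 1 (1 / δ ^ 2) * t ^ 2 := by
    rcases le_or_gt 1 |t| with h1t | h1t
    · have h1 : |t| ^ ((p - 2) * (κ - 1)) ≤ |t| ^ (2:ℝ) :=
        Real.rpow_le_rpow_of_exponent_le h1t ha2
      have h2t : |t| ^ (2:ℝ) = t ^ 2 := by
        rw [show (2:ℝ) = ((2:ℕ):ℝ) by norm_num, Real.rpow_natCast, sq_abs]
      have hm : (1:ℝ) ≤ max 1 (1 / δ ^ 2) := le_max_left _ _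
      nlinarith [sq_nonneg t]
    · have h1 : |t| ^ ((p - 2) * (κ - 1)) ≤ 1 :=
        Real.rpow_le_one (abs_nonneg t) h1t.le ha0.le
      have h2 : δ ^ 2 ≤ t ^ 2 := (sq_abs t) ▸ pow_le_pow_left₀ hδ0.le htδ 2
      have h3 : (1:ℝ) ≤ 1 / δ ^ 2 * t ^ 2 := by
        rw [div_mul_eq_mul_div, le_div_iff₀ (by positivity)]
        nlinarith
      have hm : 1 / δ ^ 2 ≤ max 1 (1 / δ ^ 2) := le_max_right _ _
      nlinarith [sq_nonneg t]
  have hg1 : g ^ (κ - 1) ≤ D * t ^ 2 := by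
    calc g ^ (κ - 1) ≤ C₂ ^ (κ - 1) * (|t| ^ (p - 2)) ^ (κ - 1) := hC
      _ = C₂ ^ (κ - 1) * |t| ^ ((p - 2) * (κ - 1)) := by rw [hpow]
      _ ≤ C₂ ^ (κ - 1) * (max 1 (1 / δ ^ 2) * t ^ 2) :=
          mul_le_mul_of_nonneg_left hD1 (Real.rpow_nonneg hC₂0.le _)
      _ = D * t ^ 2 := by rw [hDdef]; ring
  -- Step E : conclude
  have hsplit : g ^ κ = g ^ (κ - 1) * g := by
    have h := Real.rpow_add hg0 (κ - 1) 1
    rw [Real.rpow_one] at h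
    rw [← h]; norm_num
  have htf : t ^ 2 * g = t * f x t := by
    rw [hgdef]; field_simp
  calc g ^ κ ≤ D * t ^ 2 * g := by
        rw [hsplit]; exact mul_le_mul_of_nonneg_right hg1 hg0.le
    _ = D * (t * f x t) := by rw [mul_assoc, htf]
    _ ≤ D / ((μ - 2) / (2 * μ)) * ((1 / 2) * t * f x t - F x t) := by
        rw [div_mul_eq_mul_div, le_div_iff₀ hc₁]
        calc D * (t * f x t) * ((μ - 2) / (2 * μ))
            = D * ((μ - 2) / (2 * μ) * (t * f x t)) := by ring
          _ ≤ D * ((1 / 2) * t * f x t - F x t) :=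
              mul_le_mul_of_nonneg_left (key x t) hD0.le
end

section
/- Let N ≥ 1, let 2* = 2N/(N−2) for N ≥ 3 and 2* = +∞ for N ∈ {1,2}, and let f : ℝᴺ × ℝ → ℝ be continuous satisfying: (F1) there exist p ∈ (2, 2*) and C₀ > 0 with |f(x,t)| ≤ C₀(1 + |t|^{p−1}) for all (x,t); (F2) f(x,t) = o(|t|) as t → 0 uniformly in x, and F(x,t) := ∫₀ᵗ f(x,s) ds ≥ 0; (F3) f(x,t) is 1-periodic in each of x₁,…,x_N; (DL) 𝓕(x,t) := (1/2) t f(x,t) − F(x,t) > 0 for all x and all t ≠ 0, and there exist c₀ > 0, r₀ > 0 and κ > max{1, N/2} such that |f(x,t)|^κ ≤ c₀ 𝓕(x,t) |t|^κ for all (x,t) with |t| ≥ r₀. Then f satisfies (F4): 𝓕(x,t) ≥ 0 for all (x,t), and for every Λ > 0 and every δ₀ ∈ (0, Λ) there exists c₁ > 0 such that for all (x,t) with t ≠ 0, if f(x,t)/t ≥ Λ − δ₀ then (f(x,t)/t)^κ ≤ c₁ 𝓕(x,t). -/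
/-! On `|t| ≥ r₀` the estimate is (DL) itself, since `f(x,t)/t = |f(x,t)|/|t|` when the quotient
is positive. On `|t| < δ` the quotient `f(x,t)/t` is too small for the hypothesis of (F4) by (F2).
On the remaining range `δ ≤ |t| ≤ r₀` periodicity moves `x` into the unit cube, and on that
compact set the continuous function `(|f|/|t|)^κ` is dominated by a multiple of the continuous
function `𝓕`, which is positive there. -/

theorem IsCompact.exists_forall_le_mul {X : Type*} [TopologicalSpace X] {K : Set X}
    (hK : IsCompact K) {u v : X → ℝ} (hu : ContinuousOn u K) (hv : ContinuousOn v K)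
    (hv_pos : ∀ q ∈ K, 0 < v q) : ∃ B, ∀ q ∈ K, u q ≤ B * v q := by
  obtain ⟨B, hB⟩ := hK.bddAbove_image (hu.div hv fun q hq => (hv_pos q hq).ne')
  refine ⟨B, fun q hq => ?_⟩
  have hquot : u q / v q ≤ B := hB ⟨q, hq, rfl⟩
  rwa [div_le_iff₀ (hv_pos q hq)] at hquot

theorem apply_fract_of_forall_add_intCast {ι α : Type*} {g : (ι → ℝ) → α}
    (hg : ∀ (x : ι → ℝ) (k : ι → ℤ), g (fun i => x i + k i) = g x) (x : ι → ℝ) :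
    g (fun i => Int.fract (x i)) = g x := by
  convert hg x (fun i => -⌊x i⌋) using 2
  ext i
  simp [Int.fract, sub_eq_add_neg]

theorem div_le_of_abs_le_mul {a b ε : ℝ} (hb : b ≠ 0) (h : |a| ≤ ε * |b|) : a / b ≤ ε := by
  calc a / b ≤ |a| / |b| := by rw [← abs_div]; exact le_abs_self _
    _ ≤ ε := by rwa [div_le_iff₀ (abs_pos.2 hb)]

section DingLee

variable {ι : Type*} {f F : (ι → ℝ) → ℝ → ℝ}

theorem dingLee_nonneg (hF : ∀ x t, F x t = ∫ s in (0:ℝ)..t, f x s)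
    (hpos : ∀ x t, t ≠ 0 → 0 < (1 / 2) * t * f x t - F x t) (x : ι → ℝ) (t : ℝ) :
    0 ≤ (1 / 2) * t * f x t - F x t := by
  rcases eq_or_ne t 0 with rfl | ht
  · simp [hF]
  · exact (hpos x t ht).le

theorem continuous_dingLee (hf : Continuous fun q : (ι → ℝ) × ℝ => f q.1 q.2)
    (hF : ∀ x t, F x t = ∫ s in (0:ℝ)..t, f x s) :
    Continuous fun q : (ι → ℝ) × ℝ => (1 / 2) * q.2 * f q.1 q.2 - F q.1 q.2 := by
  have hFcont : Continuous fun q : (ι → ℝ) × ℝ => F q.1 q.2 := by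
    simpa only [hF] using
      intervalIntegral.continuous_parametric_primitive_of_continuous (μ := MeasureTheory.volume) hf
  exact ((continuous_const.mul continuous_snd).mul hf).sub hFcont

theorem exists_rpow_abs_div_le_mul_dingLee_of_abs_mem_Icc
    (hf : Continuous fun q : (ι → ℝ) × ℝ => f q.1 q.2)
    (hF : ∀ x t, F x t = ∫ s in (0:ℝ)..t, f x s)
    (hper : ∀ (x : ι → ℝ) (k : ι → ℤ) (t : ℝ), f (fun i => x i + k i) t = f x t)
    (hpos : ∀ x t, t ≠ 0 → 0 < (1 / 2) * t * f x t - F x t)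
    {δ r κ : ℝ} (hδ : 0 < δ) (hκ : 0 < κ) :
    ∃ B, ∀ x t, |t| ∈ Set.Icc δ r →
      (|f x t| / |t|) ^ κ ≤ B * ((1 / 2) * t * f x t - F x t) := by
  set K : Set ((ι → ℝ) × ℝ) := Set.Icc 0 1 ×ˢ (Set.Icc (-r) r ∩ {t | δ ≤ |t|})
  have hK : IsCompact K :=
    isCompact_Icc.prod (isCompact_Icc.inter_right (isClosed_le continuous_const continuous_abs))
  have ht_ne : ∀ q ∈ K, q.2 ≠ 0 := fun q hq h0 => by
    have : δ ≤ |q.2| := hq.2.2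
    rw [h0, abs_zero] at this
    linarith
  have hquot : ContinuousOn (fun q : (ι → ℝ) × ℝ => (|f q.1 q.2| / |q.2|) ^ κ) K :=
    (hf.abs.continuousOn.div continuous_snd.abs.continuousOn fun q hq =>
      abs_ne_zero.2 (ht_ne q hq)).rpow_const fun _ _ => Or.inr hκ.le
  obtain ⟨B, hB⟩ := hK.exists_forall_le_mul hquot (continuous_dingLee hf hF).continuousOn
    fun q hq => hpos q.1 q.2 (ht_ne q hq)
  refine ⟨B, fun x t ht => ?_⟩
  have hfx : f (fun i => Int.fract (x i)) = f x :=
    apply_fract_of_forall_add_intCast (g := f) (fun x k => funext (hper x k)) x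
  have hmem : ((fun i => Int.fract (x i)), t) ∈ K :=
    ⟨⟨fun i => Int.fract_nonneg _, fun i => (Int.fract_lt_one _).le⟩, abs_le.1 ht.2, ht.1⟩
  simpa only [hF, hfx] using hB _ hmem

theorem exists_rpow_div_le_mul_dingLee
    (hf : Continuous fun q : (ι → ℝ) × ℝ => f q.1 q.2)
    (hF : ∀ x t, F x t = ∫ s in (0:ℝ)..t, f x s)
    (hsmall : ∀ ε > 0, ∃ δ > 0, ∀ x t, |t| < δ → |f x t| ≤ ε * |t|)
    (hper : ∀ (x : ι → ℝ) (k : ι → ℤ) (t : ℝ), f (fun i => x i + k i) t = f x t)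
    {c₀ r₀ κ : ℝ} (hc₀ : 0 < c₀) (hκ : 0 < κ)
    (hpos : ∀ x t, t ≠ 0 → 0 < (1 / 2) * t * f x t - F x t)
    (hDL : ∀ x t, r₀ ≤ |t| →
      |f x t| ^ κ ≤ c₀ * ((1 / 2) * t * f x t - F x t) * |t| ^ κ)
    {a : ℝ} (ha : 0 < a) :
    ∃ c₁ > (0:ℝ), ∀ x t, t ≠ 0 → a ≤ f x t / t →
      (f x t / t) ^ κ ≤ c₁ * ((1 / 2) * t * f x t - F x t) := by
  obtain ⟨δ, hδ, hδsmall⟩ := hsmall (a / 2) (half_pos ha)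
  obtain ⟨B, hB⟩ := exists_rpow_abs_div_le_mul_dingLee_of_abs_mem_Icc (r := r₀) hf hF hper hpos
    hδ hκ
  refine ⟨max c₀ B, lt_max_of_lt_left hc₀, fun x t ht hat => ?_⟩
  have hquot : f x t / t = |f x t| / |t| := by
    rw [← abs_div, abs_of_pos (ha.trans_le hat)]
  have hnonneg := dingLee_nonneg hF hpos x t
  rw [hquot]
  rcases le_or_gt r₀ |t| with hlarge | hmid
  · calc (|f x t| / |t|) ^ κ ≤ c₀ * ((1 / 2) * t * f x t - F x t) := by
          rw [Real.div_rpow (abs_nonneg _) (abs_nonneg _),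
            div_le_iff₀ (Real.rpow_pos_of_pos (abs_pos.2 ht) κ)]
          exact hDL x t hlarge
      _ ≤ _ := mul_le_mul_of_nonneg_right (le_max_left _ _) hnonneg
  · have hδt : δ ≤ |t| := by
      by_contra! hlt
      have := div_le_of_abs_le_mul ht (hδsmall x t hlt)
      linarith
    calc (|f x t| / |t|) ^ κ ≤ B * ((1 / 2) * t * f x t - F x t) := hB x t ⟨hδt, hmid.le⟩
      _ ≤ _ := mul_le_mul_of_nonneg_right (le_max_right _ _) hnonneg

end DingLee

theorem DL_implies_F4_general (N : ℕ)
    (f F : (Fin N → ℝ) → ℝ → ℝ)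
    (hf : Continuous fun p : (Fin N → ℝ) × ℝ => f p.1 p.2)
    (hF : ∀ x t, F x t = ∫ s in (0:ℝ)..t, f x s)
    -- (F1)
    (p : ℝ)
    -- (F2)
    (hsmall : ∀ ε > 0, ∃ δ > 0, ∀ x t, |t| < δ → |f x t| ≤ ε * |t|)
    -- (F3): 1-periodicity in each coordinate of x
    (hper : ∀ (x : Fin N → ℝ) (k : Fin N → ℤ) (t : ℝ),
      f (fun i => x i + k i) t = f x t)
    -- (DL)
    (c₀ r₀ κ : ℝ) (hc₀ : 0 < c₀) (hκ : max 1 ((N : ℝ) / 2) < κ)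
    (hDLpos : ∀ x t, t ≠ 0 → 0 < (1 / 2) * t * f x t - F x t)
    (hDL : ∀ x t, r₀ ≤ |t| →
      |f x t| ^ κ ≤ c₀ * ((1 / 2) * t * f x t - F x t) * |t| ^ κ) :
    (∀ x t, 0 ≤ (1 / 2) * t * f x t - F x t) ∧
    ∀ Λ : ℝ, 0 < Λ → ∀ δ₀ ∈ Set.Ioo 0 Λ,
      ∃ c₁ > (0:ℝ), ∀ x t, t ≠ 0 → Λ - δ₀ ≤ f x t / t →
        (f x t / t) ^ κ ≤ c₁ * ((1 / 2) * t * f x t - F x t) := by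
  have hκ_pos : 0 < κ := (lt_max_of_lt_left one_pos).trans hκ
  exact ⟨dingLee_nonneg hF hDLpos, fun Λ _ δ₀ hδ₀ =>
    exists_rpow_div_le_mul_dingLee hf hF hsmall hper hc₀ hκ_pos hDLpos hDL (sub_pos.2 hδ₀.2)⟩

/-- **(F1), (F2), (F3), (DL) imply (F4).** Let `N ≥ 1`, `2* = 2N/(N−2)` for
`N ≥ 3` (`= ∞` for `N ≤ 2`), and `f : ℝᴺ × ℝ → ℝ` continuous satisfying the
subcritical growth (F1), `f(x,t) = o(|t|)` as `t → 0` uniformly in `x` and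
`F ≥ 0` (F2), 1-periodicity in each `xᵢ` (F3), and the Ding–Lee condition (DL):
`𝓕(x,t) = (1/2) t f(x,t) − F(x,t) > 0` for `t ≠ 0`, and there are `c₀, r₀ > 0`,
`κ > max{1, N/2}` with `|f(x,t)|^κ ≤ c₀ 𝓕(x,t) |t|^κ` for `|t| ≥ r₀`. Then
`𝓕 ≥ 0` and for every `Λ > 0`, `δ₀ ∈ (0,Λ)` there is `c₁ > 0` such that
`t ≠ 0` and `f(x,t)/t ≥ Λ − δ₀` imply `(f(x,t)/t)^κ ≤ c₁ 𝓕(x,t)`. -/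
theorem DL_implies_F4 (N : ℕ) (hN : 1 ≤ N)
    (f F : (Fin N → ℝ) → ℝ → ℝ)
    (hf : Continuous fun p : (Fin N → ℝ) × ℝ => f p.1 p.2)
    (hF : ∀ x t, F x t = ∫ s in (0:ℝ)..t, f x s)
    -- (F1)
    (p C₀ : ℝ) (hp : 2 < p) (hpsub : 3 ≤ N → p < 2 * N / (N - 2)) (hC₀ : 0 < C₀)
    (hgrowth : ∀ x t, |f x t| ≤ C₀ * (1 + |t| ^ (p - 1)))
    -- (F2)
    (hsmall : ∀ ε > 0, ∃ δ > 0, ∀ x t, |t| < δ → |f x t| ≤ ε * |t|)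
    (hFnonneg : ∀ x t, 0 ≤ F x t)
    -- (F3): 1-periodicity in each coordinate of x
    (hper : ∀ (x : Fin N → ℝ) (k : Fin N → ℤ) (t : ℝ),
      f (fun i => x i + k i) t = f x t)
    -- (DL)
    (c₀ r₀ κ : ℝ) (hc₀ : 0 < c₀) (hr₀ : 0 < r₀) (hκ : max 1 ((N : ℝ) / 2) < κ)
    (hDLpos : ∀ x t, t ≠ 0 → 0 < (1 / 2) * t * f x t - F x t)
    (hDL : ∀ x t, r₀ ≤ |t| →
      |f x t| ^ κ ≤ c₀ * ((1 / 2) * t * f x t - F x t) * |t| ^ κ) :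
    (∀ x t, 0 ≤ (1 / 2) * t * f x t - F x t) ∧
    ∀ Λ : ℝ, 0 < Λ → ∀ δ₀ ∈ Set.Ioo 0 Λ,
      ∃ c₁ > (0:ℝ), ∀ x t, t ≠ 0 → Λ - δ₀ ≤ f x t / t →
        (f x t / t) ^ κ ≤ c₁ * ((1 / 2) * t * f x t - F x t) :=
  DL_implies_F4_general N f F hf hF p hsmall hper c₀ r₀ κ hc₀ hκ hDLpos hDL
end

section
/- Let F(x,t) = t² ln(1 + t² sin²(2π x₁)), f(x,t) = 2t ln(1 + t² sin²(2π x₁)) + 2t³ sin²(2π x₁)/(1 + t² sin²(2π x₁)), and 𝓕(x,t) = (1/2) t f(x,t) − F(x,t) = t⁴ sin²(2π x₁)/(1 + t² sin²(2π x₁)). Then for every κ > 1 and every λ > 0 there exists c₀ > 0 such that for all x ∈ ℝᴺ and all t ≠ 0 with f(x,t)/t ≥ λ, one has (f(x,t)/t)^κ ≤ c₀ 𝓕(x,t). In particular this f satisfies condition (F4) with any κ > max{1, N/2}. -/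
/-!
Writing `y = t² sin²(2π x₁)`, one has `f(x,t)/t = profile y` and `𝓕(x,t) ≥ y²/(1 + y)`,
so everything reduces to the one-variable function `profile`.
Since `profile y ≤ 4y`, the constraint `profile y ≥ λ` keeps `y ≥ λ/4` away from `0`, where
`y²/(1 + y)` is comparable to `1 + y`; and `ln u ≤ κ u^{1/κ}` gives `(profile y)^κ ≲ 1 + y`.
-/

open Real

namespace Example11

noncomputable def profile (y : ℝ) : ℝ := 2 * log (1 + y) + 2 * y / (1 + y)

lemma profile_nonneg {y : ℝ} (hy : 0 ≤ y) : 0 ≤ profile y := by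
  have : 0 ≤ log (1 + y) := log_nonneg (by linarith)
  unfold profile
  positivity

lemma profile_le_four_mul {y : ℝ} (hy : 0 ≤ y) : profile y ≤ 4 * y := by
  have hlog : log (1 + y) ≤ y := by linarith [log_le_sub_one_of_pos (by linarith : 0 < 1 + y)]
  have hdiv : y / (1 + y) ≤ y := div_le_self hy (by linarith)
  unfold profile
  rw [mul_div_assoc]
  linarith

lemma profile_le_mul_rpow {κ y : ℝ} (hκ : 0 < κ) (hy : 0 ≤ y) :
    profile y ≤ (2 * κ + 2) * (1 + y) ^ κ⁻¹ := by
  have hlog : log (1 + y) ≤ κ * (1 + y) ^ κ⁻¹ := by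
    simpa [div_inv_eq_mul, mul_comm] using log_le_rpow_div (by linarith : 0 ≤ 1 + y) (inv_pos.2 hκ)
  have hone : 1 ≤ (1 + y) ^ κ⁻¹ := one_le_rpow (by linarith) (inv_pos.2 hκ).le
  have hdiv : y / (1 + y) ≤ 1 := div_le_one_of_le₀ (by linarith) (by linarith)
  unfold profile
  rw [mul_div_assoc]
  nlinarith

lemma profile_rpow_le {κ y : ℝ} (hκ : 0 < κ) (hy : 0 ≤ y) :
    profile y ^ κ ≤ (2 * κ + 2) ^ κ * (1 + y) := by
  calc profile y ^ κ ≤ ((2 * κ + 2) * (1 + y) ^ κ⁻¹) ^ κ :=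
        rpow_le_rpow (profile_nonneg hy) (profile_le_mul_rpow hκ hy) hκ.le
    _ = (2 * κ + 2) ^ κ * (1 + y) := by
        rw [mul_rpow (by positivity) (by positivity), ← rpow_mul (by linarith),
          inv_mul_cancel₀ hκ.ne', rpow_one]

lemma one_add_le_mul_sq_div {m y : ℝ} (hm : 0 < m) (hmy : m ≤ y) :
    1 + y ≤ ((1 + m) / m) ^ 2 * (y ^ 2 / (1 + y)) := by
  have hy : 0 < y := hm.trans_le hmy
  have hratio : 1 + y ≤ (1 + m) / m * y := by
    rw [div_mul_eq_mul_div, le_div_iff₀ hm]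
    nlinarith
  have hsq : (1 + y) ^ 2 ≤ ((1 + m) / m) ^ 2 * y ^ 2 := by
    rw [← mul_pow]
    exact pow_le_pow_left₀ (by linarith) hratio 2
  rw [mul_div_assoc', le_div_iff₀ (by linarith)]
  nlinarith

theorem exists_profile_rpow_le {κ lam : ℝ} (hκ : 0 < κ) (hlam : 0 < lam) :
    ∃ c₀ > (0 : ℝ), ∀ y, 0 ≤ y → lam ≤ profile y → profile y ^ κ ≤ c₀ * (y ^ 2 / (1 + y)) := by
  refine ⟨(2 * κ + 2) ^ κ * ((1 + lam / 4) / (lam / 4)) ^ 2, by positivity, fun y hy hlamy ↦ ?_⟩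
  have hmy : lam / 4 ≤ y := by linarith [profile_le_four_mul hy]
  calc profile y ^ κ ≤ (2 * κ + 2) ^ κ * (1 + y) := profile_rpow_le hκ hy
    _ ≤ (2 * κ + 2) ^ κ * (((1 + lam / 4) / (lam / 4)) ^ 2 * (y ^ 2 / (1 + y))) := by
        gcongr
        exact one_add_le_mul_sq_div (by positivity) hmy
    _ = _ := by ring

lemma quotient_eq_profile {t s : ℝ} (ht : t ≠ 0) (hs : 0 ≤ s) :
    (2 * t * log (1 + t ^ 2 * s) + 2 * t ^ 3 * s / (1 + t ^ 2 * s)) / t = profile (t ^ 2 * s) := by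
  have : 0 < 1 + t ^ 2 * s := by positivity
  unfold profile
  field_simp

lemma sq_mul_le_of_le_one {t s : ℝ} (hs₀ : 0 ≤ s) (hs₁ : s ≤ 1) : (t ^ 2 * s) ^ 2 ≤ t ^ 4 * s := by
  have : t ^ 4 * s * s ≤ t ^ 4 * s * 1 := mul_le_mul_of_nonneg_left hs₁ (by positivity)
  linarith [show (t ^ 2 * s) ^ 2 = t ^ 4 * s * s by ring]

end Example11

open Example11

/-- **Example 1.1 satisfies (F4).** With
`f(x,t) = 2t ln(1 + t² sin²(2π x₁)) + 2t³ sin²(2π x₁)/(1 + t² sin²(2π x₁))` and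
`𝓕(x,t) = t⁴ sin²(2π x₁)/(1 + t² sin²(2π x₁))`, for every `κ > 1` and `λ > 0`
there is `c₀ > 0` such that `t ≠ 0` and `f(x,t)/t ≥ λ` imply
`(f(x,t)/t)^κ ≤ c₀ 𝓕(x,t)`. In particular (F4) holds for any
`κ > max{1, N/2}`. -/
theorem example_1_1_satisfies_F4 (N : ℕ) (hN : 0 < N)
    (f 𝓕 : (Fin N → ℝ) → ℝ → ℝ)
    (hf : ∀ x t, f x t =
      2 * t * Real.log (1 + t ^ 2 * Real.sin (2 * π * x ⟨0, hN⟩) ^ 2)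
        + 2 * t ^ 3 * Real.sin (2 * π * x ⟨0, hN⟩) ^ 2
            / (1 + t ^ 2 * Real.sin (2 * π * x ⟨0, hN⟩) ^ 2))
    (h𝓕 : ∀ x t, 𝓕 x t =
      t ^ 4 * Real.sin (2 * π * x ⟨0, hN⟩) ^ 2
        / (1 + t ^ 2 * Real.sin (2 * π * x ⟨0, hN⟩) ^ 2)) :
    ∀ κ : ℝ, 1 < κ → ∀ lam : ℝ, 0 < lam →
      ∃ c₀ > (0:ℝ), ∀ (x : Fin N → ℝ) (t : ℝ), t ≠ 0 → lam ≤ f x t / t →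
        (f x t / t) ^ κ ≤ c₀ * 𝓕 x t := by
  intro κ hκ lam hlam
  obtain ⟨c₀, hc₀, hprofile⟩ := exists_profile_rpow_le (by linarith : 0 < κ) hlam
  refine ⟨c₀, hc₀, fun x t ht hlamf ↦ ?_⟩
  have hs₀ : 0 ≤ sin (2 * π * x ⟨0, hN⟩) ^ 2 := sq_nonneg _
  rw [hf, quotient_eq_profile ht hs₀] at hlamf ⊢
  rw [h𝓕]
  calc _ ≤ c₀ * _ := hprofile _ (by positivity) hlamf
    _ ≤ _ := by gcongr; exact sq_mul_le_of_le_one hs₀ (sin_sq_le_one _)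
end

section
/- Let a > 0 and F : ℝ → ℝ be defined by F(t) = a(|t|^{13/4} − (5/2)|t|^{11/4} + (45/16)|t|^{9/4}). Then F is differentiable with derivative f(t) = a((13/4)|t|^{5/4} − (55/8)|t|^{3/4} + (405/64)|t|^{1/4})·t, and 𝓕(t) := (1/2) t f(t) − F(t) = (5/8) a |t|^{9/4} (√|t| − 3/4)² ≥ 0 for all t ∈ ℝ. -/
open Real

/-- **Example 1.2 (derivative and 𝓕).** For `a > 0` and
`F(t) = a(|t|^{13/4} − (5/2)|t|^{11/4} + (45/16)|t|^{9/4})`, `F` is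
differentiable with derivative
`f(t) = a((13/4)|t|^{5/4} − (55/8)|t|^{3/4} + (405/64)|t|^{1/4})·t`, and
`𝓕(t) = (1/2) t f(t) − F(t) = (5/8) a |t|^{9/4} (√|t| − 3/4)² ≥ 0`. -/
theorem example_1_2_deriv_and_F4_nonneg (a : ℝ) (ha : 0 < a)
    (F f : ℝ → ℝ)
    (hF : ∀ t : ℝ, F t = a * (|t| ^ ((13:ℝ)/4) - (5/2) * |t| ^ ((11:ℝ)/4)
      + (45/16) * |t| ^ ((9:ℝ)/4)))
    (hf : ∀ t : ℝ, f t = a * ((13/4) * |t| ^ ((5:ℝ)/4) - (55/8) * |t| ^ ((3:ℝ)/4)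
      + (405/64) * |t| ^ ((1:ℝ)/4)) * t) :
    (∀ t : ℝ, HasDerivAt F (f t) t) ∧
    (∀ t : ℝ, (1/2) * t * f t - F t
      = (5/8) * a * |t| ^ ((9:ℝ)/4) * (Real.sqrt |t| - 3/4) ^ 2) ∧
    (∀ t : ℝ, 0 ≤ (1/2) * t * f t - F t) := by
  have key : ∀ t : ℝ, (1/2) * t * f t - F t
      = (5/8) * a * |t| ^ ((9:ℝ)/4) * (Real.sqrt |t| - 3/4) ^ 2 := by
    intro t
    set u : ℝ := |t| ^ ((1:ℝ)/4) with hu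
    have habs : (0:ℝ) ≤ |t| := abs_nonneg t
    have hq : ∀ q : ℕ, |t| ^ ((q:ℝ)/4) = u ^ q := by
      intro q
      rw [hu, ← Real.rpow_natCast (|t| ^ ((1:ℝ)/4)) q, ← Real.rpow_mul habs]
      norm_num
      ring_nf
    have hsq : Real.sqrt |t| = u ^ 2 := by
      rw [Real.sqrt_eq_rpow, show ((1:ℝ)/2) = ((2:ℕ):ℝ)/4 by norm_num, hq 2]
    have htt : t * t = u ^ 8 := by
      have h : t * t = |t| * |t| := (abs_mul_abs_self t).symm
      rw [h, show |t| = |t| ^ ((1:ℝ)) by rw [Real.rpow_one],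
        show ((1:ℝ)) = ((4:ℕ):ℝ)/4 by norm_num, hq 4]
      ring
    have h13 := hq 13
    have h11 := hq 11
    have h9 := hq 9
    have h5 := hq 5
    have h3 := hq 3
    have h1 := hq 1
    rw [hf, hF]
    norm_num only at h13 h11 h9 h5 h3 h1 ⊢
    rw [h13, h11, h9, h5, h3, h1, hsq]
    linear_combination ((1/2) * a * (13/4 * u^5 - 55/8 * u^3 + 405/64 * u)) * htt
  refine ⟨?_, key, ?_⟩
  · intro t
    have H13 := hasDerivAt_abs_rpow t (show (1:ℝ) < 13/4 by norm_num)
    have H11 := hasDerivAt_abs_rpow t (show (1:ℝ) < 11/4 by norm_num)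
    have H9 := hasDerivAt_abs_rpow t (show (1:ℝ) < 9/4 by norm_num)
    have H := ((H13.sub (H11.const_mul (5/2))).add (H9.const_mul (45/16))).const_mul a
    have hFfun : F = fun t : ℝ => a * (|t| ^ ((13:ℝ)/4) - (5/2) * |t| ^ ((11:ℝ)/4)
        + (45/16) * |t| ^ ((9:ℝ)/4)) := funext hF
    rw [hFfun]
    convert H using 1
    · rfl
    · rfl
    · rfl
    rw [hf, show (13:ℝ)/4 - 2 = 5/4 by norm_num, show (11:ℝ)/4 - 2 = 3/4 by norm_num,
      show (9:ℝ)/4 - 2 = 1/4 by norm_num]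
    ring
  · intro t
    rw [key t]
    positivity
end

section
/- Let a > 0, F(t) = a(|t|^{13/4} − (5/2)|t|^{11/4} + (45/16)|t|^{9/4}) and f(t) = a((13/4)|t|^{5/4} − (55/8)|t|^{3/4} + (405/64)|t|^{1/4})·t. Then: (i) f does not satisfy (AR): for every μ > 2 there exists t ≠ 0 with t f(t) < μ F(t) (indeed at |t| = 9/16 one has t f(t) = 2 F(t) > 0); and (ii) f does not satisfy (WN): the map t ↦ f(t)/|t| is not non-decreasing on (0, ∞). -/
/-!
Every power of `|t|` occurring in `F` and `f` is a multiple of `1/4`, so along `t = b ^ 4`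
with `b ≥ 0` both become polynomials in `b`. At `b = √3 / 2`, i.e. `t = 9/16`, these give
`F t = (3/2) a b⁹ > 0` and `t f t = 3 a b⁹ = 2 F t`, which defeats (AR) for every `μ > 2`.
For (WN), `f t / |t| = a (13/4 b⁵ - 55/8 b³ + 405/64 b)` takes a larger value at `b = 3/4`
than at `b = 4/5`.
-/

open Real

lemma abs_pow_four_rpow_div_four {b : ℝ} (hb : 0 ≤ b) (k : ℝ) : |b ^ 4| ^ (k / 4) = b ^ k := by
  rw [abs_of_nonneg (by positivity), ← rpow_natCast, ← rpow_mul hb, Nat.cast_ofNat,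
    mul_div_cancel₀ k four_ne_zero]

section PowFour

variable {a : ℝ} {F f : ℝ → ℝ} {b : ℝ}

lemma F_pow_four
    (hF : ∀ t : ℝ, F t = a * (|t| ^ ((13:ℝ)/4) - (5/2) * |t| ^ ((11:ℝ)/4)
      + (45/16) * |t| ^ ((9:ℝ)/4)))
    (hb : 0 ≤ b) :
    F (b ^ 4) = a * (b ^ 13 - 5/2 * b ^ 11 + 45/16 * b ^ 9) := by
  simp only [hF, abs_pow_four_rpow_div_four hb, rpow_ofNat]

lemma f_pow_four
    (hf : ∀ t : ℝ, f t = a * ((13/4) * |t| ^ ((5:ℝ)/4) - (55/8) * |t| ^ ((3:ℝ)/4)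
      + (405/64) * |t| ^ ((1:ℝ)/4)) * t)
    (hb : 0 ≤ b) :
    f (b ^ 4) = a * (13/4 * b ^ 5 - 55/8 * b ^ 3 + 405/64 * b) * b ^ 4 := by
  simp only [hf, abs_pow_four_rpow_div_four hb, rpow_ofNat, rpow_one]

lemma f_div_abs_pow_four
    (hf : ∀ t : ℝ, f t = a * ((13/4) * |t| ^ ((5:ℝ)/4) - (55/8) * |t| ^ ((3:ℝ)/4)
      + (405/64) * |t| ^ ((1:ℝ)/4)) * t)
    (hb : 0 < b) :
    f (b ^ 4) / |b ^ 4| = a * (13/4 * b ^ 5 - 55/8 * b ^ 3 + 405/64 * b) := by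
  rw [f_pow_four hf hb.le, abs_of_pos (by positivity), mul_div_cancel_right₀ _ (by positivity)]

end PowFour

lemma sqrt_three_div_two_pow_four : (√3 / 2) ^ 4 = (9/16 : ℝ) := by
  rw [div_pow, show (4 : ℕ) = 2 * 2 from rfl, pow_mul, sq_sqrt (by norm_num)]
  norm_num

/-- **Example 1.2 fails (AR) and (WN).** For `a > 0`,
`F(t) = a(|t|^{13/4} − (5/2)|t|^{11/4} + (45/16)|t|^{9/4})` and
`f(t) = a((13/4)|t|^{5/4} − (55/8)|t|^{3/4} + (405/64)|t|^{1/4})·t`: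
(i) for every `μ > 2` there exists `t ≠ 0` with `t f(t) < μ F(t)`
(indeed at `t = 9/16` one has `t f(t) = 2 F(t) > 0`); and
(ii) `t ↦ f(t)/|t|` is not non-decreasing on `(0,∞)`. -/
theorem example_1_2_fails_AR_and_WN (a : ℝ) (ha : 0 < a)
    (F f : ℝ → ℝ)
    (hF : ∀ t : ℝ, F t = a * (|t| ^ ((13:ℝ)/4) - (5/2) * |t| ^ ((11:ℝ)/4)
      + (45/16) * |t| ^ ((9:ℝ)/4)))
    (hf : ∀ t : ℝ, f t = a * ((13/4) * |t| ^ ((5:ℝ)/4) - (55/8) * |t| ^ ((3:ℝ)/4)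
      + (405/64) * |t| ^ ((1:ℝ)/4)) * t) :
    ((9/16 : ℝ) * f (9/16) = 2 * F (9/16) ∧ 0 < F (9/16) ∧
      ∀ μ : ℝ, 2 < μ → ∃ t : ℝ, t ≠ 0 ∧ t * f t < μ * F t) ∧
    ¬ (∀ s t : ℝ, 0 < s → s ≤ t → f s / |s| ≤ f t / |t|) := by
  set b := √3 / 2
  have hb : 0 < b := by positivity
  have hb2 : b ^ 2 = 3/4 := by rw [div_pow, sq_sqrt (by norm_num)]; norm_num
  have hF916 : F (9/16) = 3/2 * a * b ^ 9 := by
    rw [← sqrt_three_div_two_pow_four, F_pow_four hF hb.le]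
    linear_combination a * b ^ 9 * (b ^ 2 - 7/4) * hb2
  have hAR : (9/16 : ℝ) * f (9/16) = 2 * F (9/16) := by
    rw [hF916, ← sqrt_three_div_two_pow_four, f_pow_four hf hb.le]
    linear_combination a * b ^ 9 * (13/4 * b ^ 2 - 71/16) * hb2
  have hFpos : 0 < F (9/16) := by rw [hF916]; positivity
  refine ⟨⟨hAR, hFpos, fun μ hμ => ⟨9/16, by norm_num, ?_⟩⟩, fun hWN => ?_⟩
  · rw [hAR]
    exact mul_lt_mul_of_pos_right hμ hFpos
  · have h := hWN ((3/4) ^ 4) ((4/5) ^ 4) (by norm_num) (by norm_num)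
    rw [f_div_abs_pow_four hf (by norm_num), f_div_abs_pow_four hf (by norm_num)] at h
    nlinarith
end

section
/- Let Λ > 0, let a ∈ (0, 64Λ/405), let F(t) = a(|t|^{13/4} − (5/2)|t|^{11/4} + (45/16)|t|^{9/4}), f(t) = a((13/4)|t|^{5/4} − (55/8)|t|^{3/4} + (405/64)|t|^{1/4})·t, and 𝓕(t) = (1/2) t f(t) − F(t) = (5/8) a |t|^{9/4} (√|t| − 3/4)². Then there exist δ₀ ∈ (0, Λ) and c₀ > 0 such that for every t ≠ 0 with f(t)/t ≥ Λ − δ₀, one has (f(t)/t)^{12/5} ≤ c₀ 𝓕(t); i.e., f satisfies condition (F4) with κ = 12/5. -/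
open Real

private lemma aux_poly (y : ℝ) (h0 : 0 ≤ y) (h1 : y ≤ 6/5) :
    y*((13:ℝ)/4*y^2 - 55/8*y + 405/64)^2 ≤ 48/5 := by
  nlinarith [sq_nonneg (y - 3/4), sq_nonneg (y - 27/52), mul_nonneg h0 (sq_nonneg (y-3/4)),
    mul_nonneg (sub_nonneg.mpr h1) (sq_nonneg (y-3/4)),
    mul_nonneg (sub_nonneg.mpr h1) (sq_nonneg (y-27/52)),
    mul_nonneg h0 (sq_nonneg (y-27/52)),
    mul_nonneg (mul_nonneg h0 (sub_nonneg.mpr h1)) (sq_nonneg (y-3/4)),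
    mul_nonneg (mul_nonneg h0 (sub_nonneg.mpr h1)) (sq_nonneg (y-27/52)),
    sq_nonneg y, mul_nonneg h0 (sub_nonneg.mpr h1)]

private lemma aux1 (s : ℝ) (hs : 0 ≤ s)
    (h : (405:ℝ)/128 ≤ (13/4)*s^5 - (55/8)*s^3 + (405/64)*s) : (6:ℝ)/5 ≤ s^2 := by
  by_contra h'
  push_neg at h'
  have hpoly := aux_poly (s^2) (sq_nonneg s) h'.le
  nlinarith [h, hpoly]

/-- **Example 1.2 satisfies (F4) with κ = 12/5.** Let `Λ > 0`,
`a ∈ (0, 64Λ/405)`,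
`F(t) = a(|t|^{13/4} − (5/2)|t|^{11/4} + (45/16)|t|^{9/4})`,
`f(t) = a((13/4)|t|^{5/4} − (55/8)|t|^{3/4} + (405/64)|t|^{1/4})·t`, and
`𝓕(t) = (1/2) t f(t) − F(t) = (5/8) a |t|^{9/4} (√|t| − 3/4)²`. Then there
exist `δ₀ ∈ (0, Λ)` and `c₀ > 0` such that `t ≠ 0` and `f(t)/t ≥ Λ − δ₀`
imply `(f(t)/t)^{12/5} ≤ c₀ 𝓕(t)`. -/
theorem example_1_2_satisfies_F4 (Λ a : ℝ) (hΛ : 0 < Λ)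
    (ha : a ∈ Set.Ioo 0 (64 * Λ / 405))
    (F f 𝓕 : ℝ → ℝ)
    (hF : ∀ t : ℝ, F t = a * (|t| ^ ((13:ℝ)/4) - (5/2) * |t| ^ ((11:ℝ)/4)
      + (45/16) * |t| ^ ((9:ℝ)/4)))
    (hf : ∀ t : ℝ, f t = a * ((13/4) * |t| ^ ((5:ℝ)/4) - (55/8) * |t| ^ ((3:ℝ)/4)
      + (405/64) * |t| ^ ((1:ℝ)/4)) * t)
    (h𝓕 : ∀ t : ℝ, 𝓕 t = (5/8) * a * |t| ^ ((9:ℝ)/4) * (Real.sqrt |t| - 3/4) ^ 2)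
    (h𝓕eq : ∀ t : ℝ, 𝓕 t = (1/2) * t * f t - F t) :
    ∃ δ₀ ∈ Set.Ioo 0 Λ, ∃ c₀ > (0:ℝ),
      ∀ t : ℝ, t ≠ 0 → Λ - δ₀ ≤ f t / t →
        (f t / t) ^ ((12:ℝ)/5) ≤ c₀ * 𝓕 t := by
  obtain ⟨ha0, haΛ⟩ := ha
  refine ⟨Λ/2, ⟨by linarith, by linarith⟩,
    (8*a) ^ ((12:ℝ)/5) * (512/(45*a)), by positivity, ?_⟩
  intro t ht hut
  have hT0 : (0:ℝ) < |t| := abs_pos.mpr ht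
  set T := |t| with hTdef
  set s := Real.sqrt (Real.sqrt T) with hsdef
  have hs0 : 0 < s := Real.sqrt_pos.mpr (Real.sqrt_pos.mpr hT0)
  have hs2 : s^2 = Real.sqrt T := Real.sq_sqrt (Real.sqrt_nonneg T)
  have hs14 : s = T ^ ((1:ℝ)/4) := by
    rw [hsdef, Real.sqrt_eq_rpow, Real.sqrt_eq_rpow, ← Real.rpow_mul hT0.le]
    norm_num
  have e5 : T ^ ((5:ℝ)/4) = s ^ 5 := by
    rw [hs14, ← Real.rpow_natCast (T ^ ((1:ℝ)/4)) 5, ← Real.rpow_mul hT0.le]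
    norm_num
  have e3 : T ^ ((3:ℝ)/4) = s ^ 3 := by
    rw [hs14, ← Real.rpow_natCast (T ^ ((1:ℝ)/4)) 3, ← Real.rpow_mul hT0.le]
    norm_num
  have e9 : T ^ ((9:ℝ)/4) = s ^ 9 := by
    rw [hs14, ← Real.rpow_natCast (T ^ ((1:ℝ)/4)) 9, ← Real.rpow_mul hT0.le]
    norm_num
  have e1 : T ^ ((1:ℝ)/4) = s ^ 1 := by rw [hs14, pow_one]
  have hu : f t / t = a * ((13/4)*s^5 - (55/8)*s^3 + (405/64)*s) := by
    rw [hf t, mul_div_assoc, div_self ht, mul_one, ← hTdef, e5, e3, e1, pow_one]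
  have hFt : 𝓕 t = (5/8) * a * s^9 * (s^2 - 3/4)^2 := by
    rw [h𝓕 t, ← hTdef, e9, ← hs2]
  -- From the lower bound on f t / t, deduce the lower bound on g(s)
  have hg : (405:ℝ)/128 ≤ (13/4)*s^5 - (55/8)*s^3 + (405/64)*s := by
    have h1 : Λ/2 ≤ a * ((13/4)*s^5 - (55/8)*s^3 + (405/64)*s) := by
      rw [← hu]; linarith
    nlinarith [h1, ha0, haΛ]
  have hy : (6:ℝ)/5 ≤ s^2 := aux1 s hs0.le hg
  have hs1 : (1:ℝ) ≤ s := by nlinarith [hy, hs0.le]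
  -- upper bound on f t / t
  have hub : f t / t ≤ 8*a*s^5 := by
    have hp : (13/4)*s^4 - (55/8)*s^2 + 405/64 ≤ 8*s^4 := by
      nlinarith [hy, sq_nonneg s, sq_nonneg (s^2 - 6/5)]
    rw [hu]
    calc a * ((13/4)*s^5 - (55/8)*s^3 + (405/64)*s)
        = (a*s) * ((13/4)*s^4 - (55/8)*s^2 + 405/64) := by ring
      _ ≤ (a*s) * (8*s^4) := mul_le_mul_of_nonneg_left hp (by positivity)
      _ = 8*a*s^5 := by ring
  have hu0 : 0 < f t / t := lt_of_lt_of_le (by linarith) hut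
  -- lower bound on 𝓕 t
  have hF9 : (45/512) * a * s^13 ≤ 𝓕 t := by
    rw [hFt]
    have h3 : (3/8)*s^2 ≤ s^2 - 3/4 := by linarith
    have h4 : ((3/8)*s^2)^2 ≤ (s^2 - 3/4)^2 :=
      pow_le_pow_left₀ (by positivity) h3 2
    calc (45/512) * a * s^13 = (5/8) * a * s^9 * ((3/8)*s^2)^2 := by ring
      _ ≤ (5/8) * a * s^9 * (s^2 - 3/4)^2 :=
        mul_le_mul_of_nonneg_left h4 (by positivity)
  -- rpow computation
  have h1 : (f t / t) ^ ((12:ℝ)/5) ≤ (8*a*s^5) ^ ((12:ℝ)/5) :=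
    Real.rpow_le_rpow hu0.le hub (by norm_num)
  have h2 : (8*a*s^5) ^ ((12:ℝ)/5) = (8*a) ^ ((12:ℝ)/5) * s^12 := by
    rw [Real.mul_rpow (by positivity) (by positivity)]
    congr 1
    rw [← Real.rpow_natCast s 5, ← Real.rpow_mul hs0.le,
      ← Real.rpow_natCast s 12]
    norm_num
  have h5 : (8*a) ^ ((12:ℝ)/5) * s^12 ≤ (8*a) ^ ((12:ℝ)/5) * s^13 := by
    have : s^12 ≤ s^13 := pow_le_pow_right₀ hs1 (by norm_num)
    exact mul_le_mul_of_nonneg_left this (by positivity)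
  have h6 : (8*a) ^ ((12:ℝ)/5) * s^13
      = ((8*a) ^ ((12:ℝ)/5) * (512/(45*a))) * ((45/512) * a * s^13) := by
    field_simp
  calc (f t / t) ^ ((12:ℝ)/5) ≤ (8*a*s^5) ^ ((12:ℝ)/5) := h1
    _ = (8*a) ^ ((12:ℝ)/5) * s^12 := h2
    _ ≤ (8*a) ^ ((12:ℝ)/5) * s^13 := h5
    _ = ((8*a) ^ ((12:ℝ)/5) * (512/(45*a))) * ((45/512) * a * s^13) := h6
    _ ≤ ((8*a) ^ ((12:ℝ)/5) * (512/(45*a))) * 𝓕 t := by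
        exact mul_le_mul_of_nonneg_left hF9 (by positivity)
end
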